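/- There do not exist a positive-edge-weighted tree T with five distinguished leaves a, b, c, d, e and reals 0 ≤ d_min ≤ d_max such that: d_min ≤ d_T(a,b), d_T(a,e), d_T(b,e), d_T(c,e), d_T(d,e), d_T(c,d) ≤ d_max, d_T(b,c) < d_min, d_T(a,c) > d_max, and d_T(b,d) > d_max. (Forbidden partial coloring f-c(B).) -/
import Mathlib


open SimpleGraph

/-- A tree with positive real edge weights. -/
structure WTree (α : Type) where
  g : SimpleGraph α
  isTree : g.IsTree
  w : α → α → ℝ
  w_symm : ∀ a b, w a b = w b a
  w_pos : ∀ a b, g.Adj a b → 0 < w a b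

/-- The weighted distance between two vertices of a weighted tree: the sum of
the weights of the edges on the unique path between them. -/
noncomputable def WTree.dist {α : Type} (T : WTree α) (u v : α) : ℝ :=
  (((T.isTree.existsUnique_path u v).exists.choose).darts.map
    (fun d => T.w d.toProd.1 d.toProd.2)).sum

namespace WTree
variable {α : Type} (T : WTree α)

def wsum {u v : α} (p : T.g.Walk u v) : ℝ :=
  (p.darts.map (fun d => T.w d.toProd.1 d.toProd.2)).sum

lemma wsum_append {u v x : α} (p : T.g.Walk u v) (q : T.g.Walk v x) :
    T.wsum (p.append q) = T.wsum p + T.wsum q := by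
  simp [wsum, Walk.darts_append]

lemma wsum_nonneg {u v : α} (p : T.g.Walk u v) : 0 ≤ T.wsum p := by
  apply List.sum_nonneg
  intro x hx
  simp only [List.mem_map] at hx
  obtain ⟨d, hd, rfl⟩ := hx
  exact le_of_lt (T.w_pos _ _ d.adj)

lemma wsum_reverse {u v : α} (p : T.g.Walk u v) : T.wsum p.reverse = T.wsum p := by
  simp [wsum, Walk.darts_reverse, List.map_reverse, List.sum_reverse, Function.comp]
  congr 1
  apply List.map_congr_left
  intro d _
  exact T.w_symm _ _

lemma dist_eq {u v : α} (p : T.g.Walk u v) (hp : p.IsPath) : T.dist u v = T.wsum p := by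
  have h := (T.isTree.existsUnique_path u v)
  have h1 : (h.exists.choose) = p := h.unique h.exists.choose_spec hp
  rw [WTree.dist, show (T.isTree.existsUnique_path u v).exists.choose = p from h1]
  rfl

lemma dist_comm (u v : α) : T.dist u v = T.dist v u := by
  obtain ⟨p, hp⟩ := (T.isTree.existsUnique_path u v).exists
  rw [T.dist_eq p hp, T.dist_eq p.reverse hp.reverse, wsum_reverse]

lemma dist_nonneg' (u v : α) : 0 ≤ T.dist u v := by
  obtain ⟨p, hp⟩ := (T.isTree.existsUnique_path u v).exists
  rw [T.dist_eq p hp]; exact T.wsum_nonneg p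

/-- helper: an append of two paths meeting only at the midpoint is a path -/
lemma isPath_append {x m y : α} {q : T.g.Walk x m} {s : T.g.Walk m y}
    (hq : q.IsPath) (hs : s.IsPath)
    (h : ∀ v ∈ q.support, v ∈ s.support → v = m) : (q.append s).IsPath := by
  rw [Walk.isPath_def, Walk.support_append]
  apply List.Nodup.append hq.support_nodup
  · have := hs.support_nodup
    rw [s.support_eq_cons] at this
    exact this.of_cons
  · intro v hv hv'
    have hm : v = m := h v hv (List.mem_of_mem_tail hv')
    subst hm
    have hnd : s.support.Nodup := hs.support_nodup
    rw [s.support_eq_cons] at hnd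
    exact (List.nodup_cons.mp hnd).1 hv'

variable [DecidableEq α]

lemma dist_add {x y m : α} (p : T.g.Walk x y) (hp : p.IsPath) (hm : m ∈ p.support) :
    T.dist x m + T.dist m y = T.dist x y := by
  have h := T.wsum_append (p.takeUntil m hm) (p.dropUntil m hm)
  rw [p.take_spec hm] at h
  rw [T.dist_eq _ (hp.takeUntil hm), T.dist_eq _ (hp.dropUntil hm), T.dist_eq p hp, ← h]

lemma disj {x y m : α} (p : T.g.Walk x y) (hp : p.IsPath) (hm : m ∈ p.support) :
    ∀ v, v ∈ (p.takeUntil m hm).support → v ∈ (p.dropUntil m hm).support → v = m := by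
  intro v hv hv'
  by_contra hne
  have hnd : p.support.Nodup := hp.support_nodup
  rw [← p.take_spec hm, Walk.support_append] at hnd
  have hmem : v ∈ (p.dropUntil m hm).support.tail := by
    have hc := (p.dropUntil m hm).support_eq_cons
    rw [hc] at hv'
    rcases List.mem_cons.mp hv' with h | h
    · exact absurd h hne
    · exact h
  exact (List.disjoint_of_nodup_append hnd) hv hmem

lemma meet {x y : α} (p : T.g.Walk x y) :
    ∀ {z u : α} (r : T.g.Walk z u), r.IsPath → u ∈ p.support →
      ∃ m, ∃ _hm : m ∈ p.support, ∃ q : T.g.Walk z m,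
        q.IsPath ∧ q.support ⊆ r.support ∧ ∀ v ∈ q.support, v ∈ p.support → v = m := by
  intro z u r
  induction r with
  | @nil u =>
    intro _ hu
    refine ⟨u, hu, Walk.nil, Walk.IsPath.nil, by simp, ?_⟩
    intro v hv _
    simpa using hv
  | @cons z z' u h r' ih =>
    intro hr hu
    by_cases hz : z ∈ p.support
    · refine ⟨z, hz, Walk.nil, Walk.IsPath.nil, by simp, ?_⟩
      intro v hv _
      simpa using hv
    · obtain ⟨m, hm, q, hq, hsub, hme⟩ := ih hr.of_cons hu
      refine ⟨m, hm, Walk.cons h q, ?_, ?_, ?_⟩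
      · rw [Walk.cons_isPath_iff]
        exact ⟨hq, fun hzq => ((Walk.cons_isPath_iff _ _).mp hr).2 (hsub hzq)⟩
      · intro v hv
        rw [Walk.support_cons] at hv ⊢
        rcases List.mem_cons.mp hv with h' | h'
        · exact List.mem_cons.mpr (Or.inl h')
        · exact List.mem_cons.mpr (Or.inr (hsub h'))
      · intro v hv hvp
        rw [Walk.support_cons] at hv
        rcases List.mem_cons.mp hv with h' | h'
        · exact absurd (h' ▸ hvp) hz
        · exact hme v h' hvp

lemma med {x y : α} (p : T.g.Walk x y) (hp : p.IsPath) (z : α) :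
    ∃ m ∈ p.support, T.dist x m + T.dist m y = T.dist x y ∧
      T.dist z m + T.dist m x = T.dist z x ∧ T.dist z m + T.dist m y = T.dist z y := by
  obtain ⟨r, hr⟩ := (T.isTree.existsUnique_path z x).exists
  obtain ⟨m, hm, q, hq, -, hme⟩ := T.meet p r hr p.start_mem_support
  refine ⟨m, hm, T.dist_add p hp hm, ?_, ?_⟩
  · have hs : ((p.takeUntil m hm).reverse).IsPath := (hp.takeUntil hm).reverse
    have hap : (q.append (p.takeUntil m hm).reverse).IsPath := by
      apply T.isPath_append hq hs
      intro v hv hv'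
      exact hme v hv (p.support_takeUntil_subset hm
        (by rwa [Walk.support_reverse, List.mem_reverse] at hv'))
    have h := T.dist_eq _ hap
    rw [wsum_append, wsum_reverse] at h
    rw [T.dist_eq q hq, T.dist_comm m x, T.dist_eq _ (hp.takeUntil hm), h]
  · have hap : (q.append (p.dropUntil m hm)).IsPath := by
      apply T.isPath_append hq (hp.dropUntil hm)
      intro v hv hv'
      exact hme v hv (p.support_dropUntil_subset hm hv')
    have h := T.dist_eq _ hap
    rw [wsum_append] at h
    rw [T.dist_eq q hq, T.dist_eq _ (hp.dropUntil hm), h]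

lemma dist_triangle' (u v x : α) : T.dist u v ≤ T.dist u x + T.dist x v := by
  obtain ⟨p, hp⟩ := (T.isTree.existsUnique_path u v).exists
  obtain ⟨m, _, h1, h2, h3⟩ := T.med p hp x
  linarith [h1, h2, h3, T.dist_nonneg' x m, T.dist_comm u x, T.dist_comm u m]

lemma order {x y m1 m2 : α} (p : T.g.Walk x y) (hp : p.IsPath)
    (h1 : m1 ∈ p.support) (h2 : m2 ∈ p.support) :
    (T.dist x m1 + T.dist m1 m2 = T.dist x m2 ∧ T.dist m1 m2 + T.dist m2 y = T.dist m1 y) ∨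
    (T.dist x m2 + T.dist m2 m1 = T.dist x m1 ∧ T.dist m2 m1 + T.dist m1 y = T.dist m2 y) := by
  have hsplit : m2 ∈ (p.takeUntil m1 h1).support ∨ m2 ∈ (p.dropUntil m1 h1).support := by
    rw [← Walk.mem_support_append_iff, p.take_spec h1]; exact h2
  rcases hsplit with hc | hc
  · right
    constructor
    · exact T.dist_add (p.takeUntil m1 h1) (hp.takeUntil h1) hc
    · have hq : (((p.takeUntil m1 h1).dropUntil m2 hc)).IsPath := (hp.takeUntil h1).dropUntil hc
      have hap : ((((p.takeUntil m1 h1).dropUntil m2 hc)).append (p.dropUntil m1 h1)).IsPath := by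
        apply T.isPath_append hq (hp.dropUntil h1)
        intro v hv hv'
        exact T.disj p hp h1 v ((p.takeUntil m1 h1).support_dropUntil_subset hc hv) hv'
      have h := T.dist_eq _ hap
      rw [wsum_append] at h
      rw [T.dist_eq _ hq, T.dist_eq _ (hp.dropUntil h1), h]
  · left
    constructor
    · have hq : (((p.dropUntil m1 h1).takeUntil m2 hc)).IsPath := (hp.dropUntil h1).takeUntil hc
      have hap : ((p.takeUntil m1 h1).append (((p.dropUntil m1 h1).takeUntil m2 hc))).IsPath := by
        apply T.isPath_append (hp.takeUntil h1) hq
        intro v hv hv'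
        exact T.disj p hp h1 v hv ((p.dropUntil m1 h1).support_takeUntil_subset hc hv')
      have h := T.dist_eq _ hap
      rw [wsum_append] at h
      rw [T.dist_eq _ (hp.takeUntil h1), T.dist_eq _ hq, h]
    · exact T.dist_add (p.dropUntil m1 h1) (hp.dropUntil h1) hc

lemma four_point (x y z w : α) :
    T.dist x y + T.dist z w ≤ max (T.dist x z + T.dist y w) (T.dist x w + T.dist y z) := by
  obtain ⟨p, hp⟩ := (T.isTree.existsUnique_path x y).exists
  obtain ⟨m1, hm1, a1, a2, a3⟩ := T.med p hp z
  obtain ⟨m2, hm2, b1, b2, b3⟩ := T.med p hp w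
  rcases T.order p hp hm1 hm2 with ⟨e1, e2⟩ | ⟨e1, e2⟩
  · apply le_max_of_le_right
    linarith [a1, a3, b2, e1, e2, T.dist_triangle' z w m1, T.dist_triangle' m1 w m2,
      T.dist_comm x w, T.dist_comm m2 x, T.dist_comm y z, T.dist_comm m2 w,
      T.dist_comm x m1, T.dist_comm x m2, T.dist_comm z m1, T.dist_comm m1 m2]
  · apply le_max_of_le_left
    linarith [b1, b3, a2, e1, e2, T.dist_triangle' z w m2, T.dist_triangle' z m2 m1,
      T.dist_comm x z, T.dist_comm y w, T.dist_comm x m1, T.dist_comm m1 m2,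
      T.dist_comm m2 w, T.dist_comm w y, T.dist_comm x m2, T.dist_comm z m1]

end WTree


/-- A vertex of a weighted tree is a leaf if it has exactly one neighbor. -/
def WTree.IsLeaf {α : Type} (T : WTree α) (v : α) : Prop :=
  ∃! u, T.g.Adj v u

/-- `G = PCG(T, dmin, dmax)` via the leaf-assignment `f`. -/
def IsPCGWith {V β : Type} (G : SimpleGraph V) (T : WTree β) (f : V → β)
    (dmin dmax : ℝ) : Prop :=
  Function.Injective f ∧ (∀ v, T.IsLeaf (f v)) ∧ (∀ b, T.IsLeaf b → ∃ v, f v = b) ∧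
    ∀ u v : V, u ≠ v →
      (G.Adj u v ↔ dmin ≤ T.dist (f u) (f v) ∧ T.dist (f u) (f v) ≤ dmax)

/-- A graph is a pairwise compatibility graph. -/
def IsPCG {V : Type} (G : SimpleGraph V) : Prop :=
  ∃ (β : Type) (T : WTree β) (f : V → β) (dmin dmax : ℝ),
    0 ≤ dmin ∧ dmin ≤ dmax ∧ IsPCGWith G T f dmin dmax

theorem forbidden_B : ¬ ∃ (β : Type) (T : WTree β) (a b c d e : β) (dmin dmax : ℝ),
    T.IsLeaf a ∧ T.IsLeaf b ∧ T.IsLeaf c ∧ T.IsLeaf d ∧ T.IsLeaf e ∧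
    a ≠ b ∧ a ≠ c ∧ a ≠ d ∧ a ≠ e ∧ b ≠ c ∧ b ≠ d ∧ b ≠ e ∧
    c ≠ d ∧ c ≠ e ∧ d ≠ e ∧
    0 ≤ dmin ∧ dmin ≤ dmax ∧
    dmin ≤ T.dist a b ∧ T.dist a b ≤ dmax ∧
    dmin ≤ T.dist a e ∧ T.dist a e ≤ dmax ∧
    dmin ≤ T.dist b e ∧ T.dist b e ≤ dmax ∧
    dmin ≤ T.dist c e ∧ T.dist c e ≤ dmax ∧
    dmin ≤ T.dist d e ∧ T.dist d e ≤ dmax ∧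
    dmin ≤ T.dist c d ∧ T.dist c d ≤ dmax ∧
    T.dist b c < dmin ∧
    dmax < T.dist a c ∧ dmax < T.dist b d := by
  classical
  rintro ⟨β, T, a, b, c, d, e, dmin, dmax, -, -, -, -, -, -, -, -, -, -, -, -,
    -, -, -, hmin, hmax, h1, h2, h3, h4, h5, h6, h7, h8, h9, h10, h11, h12, hbc, hac, hbd⟩
  have fp1 := T.four_point a c b e
  have fp2 := T.four_point b d c e
  have c1 := T.dist_comm c b
  have c2 := T.dist_comm d c
  rcases le_max_iff.mp fp1 with k1 | k1 <;> rcases le_max_iff.mp fp2 with k2 | k2 <;> linarith
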